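/- arXiv:0908.3112 — 4 statements merged into one kernel-verified Lean document; each statement's English description precedes it below -/
import Mathlib

section
/- Bootstrap lemma (abstract form of the proof of Corollary 3.2). Let s ≥ 0, let r ≥ 3 be an integer, let ε_s > 0, C_s > 0, T > 0, and let z ∈ C¹([−T,T], 𝒫_s). Suppose N : B(0,ε_s) → ℝ is a continuous function such that |N(w) − ‖w‖_s²| ≤ C_s ‖w‖_s³ for all w ∈ B(0,ε_s), and such that the map t ↦ N(z(t)) is differentiable with |d/dt N(z(t))| ≤ C_s ‖z(t)‖_s^{r+3} for every t with z(t) ∈ B(0,ε_s). Then there exists ε* > 0, depending only on C_s and r, such that if ‖z(0)‖_s = ε with ε ≤ ε* and 2ε < ε_s, then ‖z(t)‖_s ≤ 2ε for every t ∈ [−T,T] with |t| ≤ ε^{−r}. -/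
open scoped BigOperators

noncomputable section

/-- The index set `𝒵 = ℤ^d × {±1}` (the `Bool` component encodes the sign `±1`). -/
abbrev Idx (d : ℕ) := (Fin d → ℤ) × Bool

namespace Paper

attribute [local instance] Classical.propDecidable

variable {d : ℕ}

/-- `|j| = max(1, |a|)` where `|a|` is the euclidean norm of `a ∈ ℤ^d`. -/
def wt (j : Idx d) : ℝ := max 1 (Real.sqrt (∑ i, ((j.1 i : ℝ)) ^ 2))

/-- `j̄`: flip the sign component. -/
def bar (j : Idx d) : Idx d := (j.1, !j.2)

/-- `𝐣̄`: apply `bar` to every entry of a tuple. -/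
def barT {k : ℕ} (J : Fin k → Idx d) : Fin k → Idx d := fun i => bar (J i)

/-- The involution `ρ`, `ρ(z)_j = z_{j̄}`. -/
def rho (z : Idx d → ℂ) : Idx d → ℂ := fun j => z (bar j)

/-- The list of the weights `|j₁|, …, |j_k|` sorted in decreasing order. -/
def sw {k : ℕ} (J : Fin k → Idx d) : List ℝ :=
  (List.ofFn fun i => wt (J i)).insertionSort (· ≥ ·)

/-- `μ(𝐣)`: the third largest among `|j₁|, …, |j_k|` (equal to `1` if `k ≤ 2`). -/
def mu {k : ℕ} (J : Fin k → Idx d) : ℝ := (sw J).getD 2 1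

/-- `S(𝐣)`: the largest minus the second largest among `|j₁|, …, |j_k|`. -/
def S {k : ℕ} (J : Fin k → Idx d) : ℝ := (sw J).getD 0 0 - (sw J).getD 1 0

/-- `β(𝐣)`: the product of the two largest among `|j₁|, …, |j_k|`. -/
def beta {k : ℕ} (J : Fin k → Idx d) : ℝ := (sw J).getD 0 1 * (sw J).getD 1 1

/-- `Ω(𝐣) = ω_{j₁} + ⋯ + ω_{j_k}`. -/
def Om (ω : Idx d → ℝ) {k : ℕ} (J : Fin k → Idx d) : ℝ := ∑ i, ω (J i)

/-- `f` is a permutation of (the entries of) `g`. -/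
def IsPermOf {k : ℕ} (f g : Fin k → Idx d) : Prop := ∃ σ : Equiv.Perm (Fin k), f = g ∘ σ

/-- Non-resonance of the frequency vector `ω`. -/
def NonResonant (ω : Idx d → ℝ) : Prop :=
  ∀ r : ℕ, 3 ≤ r → ∃ γ₀ > (0 : ℝ), ∃ α > (0 : ℝ), ∀ i : ℕ, 1 ≤ i → i ≤ r →
    ∀ J : Fin i → Idx d, ¬ IsPermOf (barT J) J → γ₀ / mu J ^ α ≤ |Om ω J|

/-- Membership in the space `𝒫_s`. -/
def InPs (s : ℝ) (z : Idx d → ℂ) : Prop :=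
  Summable fun j : Idx d => wt j ^ (2 * s) * ‖z j‖ ^ 2

/-- The Sobolev-type norm `‖z‖_s`. -/
def pnorm (s : ℝ) (z : Idx d → ℂ) : ℝ :=
  Real.sqrt (∑' j : Idx d, wt j ^ (2 * s) * ‖z j‖ ^ 2)

end Paper

open Paper


open Set Filter Topology

/-- Continuous induction: if `f` improves `≤ 2ε` to `≤ (3/2)ε` on initial segments,
then `f ≤ 2ε` on all of `[0,b]`. -/
lemma bootstrap_aux {f : ℝ → ℝ} {b ε : ℝ} (hε : 0 < ε)
    (hf : ContinuousOn f (Set.Icc 0 b)) (h0 : f 0 ≤ 2 * ε)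
    (improve : ∀ t ∈ Set.Icc (0:ℝ) b, (∀ τ ∈ Set.Icc (0:ℝ) t, f τ ≤ 2 * ε) →
      f t ≤ (3/2) * ε) :
    ∀ t ∈ Set.Icc (0:ℝ) b, f t ≤ 2 * ε := by
  rcases lt_or_ge b 0 with hb | hb
  · intro t ht; exact absurd (ht.1.trans ht.2) (not_le.mpr hb)
  set A : Set ℝ := {t ∈ Set.Icc (0:ℝ) b | ∀ τ ∈ Set.Icc (0:ℝ) t, f τ ≤ 2 * ε} with hA
  have h0A : (0:ℝ) ∈ A := by
    refine ⟨⟨le_refl _, hb⟩, ?_⟩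
    intro τ hτ
    have : τ = 0 := le_antisymm hτ.2 hτ.1
    simpa [this] using h0
  have hAne : A.Nonempty := ⟨0, h0A⟩
  have hAbdd : BddAbove A := ⟨b, fun x hx => hx.1.2⟩
  set c := sSup A with hc
  have hc0 : 0 ≤ c := le_csSup hAbdd h0A
  have hcb : c ≤ b := csSup_le hAne fun x hx => hx.1.2
  have hflec : f c ≤ 2 * ε := by
    rcases eq_or_lt_of_le hc0 with h | h
    · simpa [← h] using h0
    · have hcont : ContinuousWithinAt f (Set.Icc 0 b) c := hf.continuousWithinAt ⟨hc0, hcb⟩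
      have hmono : 𝓝[Set.Iio c] c ≤ 𝓝[Set.Icc 0 b] c := by
        rw [← nhdsWithin_Ioo_eq_nhdsLT h]
        exact nhdsWithin_mono _ (fun x hx => ⟨hx.1.le, hx.2.le.trans hcb⟩)
      have htend : Tendsto f (𝓝[Set.Iio c] c) (𝓝 (f c)) := hcont.tendsto.mono_left hmono
      refine le_of_tendsto htend ?_
      filter_upwards [Ioo_mem_nhdsLT_of_mem ⟨h, le_refl c⟩] with x hx
      obtain ⟨y, hyA, hy⟩ := exists_lt_of_lt_csSup hAne hx.2
      exact hyA.2 x ⟨hx.1.le, hy.le⟩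
  have hcA : c ∈ A := by
    refine ⟨⟨hc0, hcb⟩, ?_⟩
    intro τ hτ
    rcases lt_or_eq_of_le hτ.2 with hlt | heq
    · obtain ⟨x, hxA, hx⟩ := exists_lt_of_lt_csSup hAne hlt
      exact hxA.2 τ ⟨hτ.1, hx.le⟩
    · exact heq ▸ hflec
  have hfc : f c ≤ (3/2) * ε := improve c ⟨hc0, hcb⟩ hcA.2
  have hcbeq : c = b := by
    by_contra hne
    have hclt : c < b := lt_of_le_of_ne hcb hne
    have hcont : ContinuousWithinAt f (Set.Icc 0 b) c := hf.continuousWithinAt ⟨hc0, hcb⟩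
    have hflt : f c < 2 * ε := lt_of_le_of_lt hfc (by linarith)
    have hev : ∀ᶠ x in 𝓝[Set.Icc 0 b] c, f x < 2 * ε :=
      hcont.tendsto.eventually_lt_const hflt
    obtain ⟨δ, hδ, hball⟩ := Metric.mem_nhdsWithin_iff.mp hev
    set t' := min b (c + δ/2) with ht'
    have hct' : c < t' := lt_min hclt (by linarith)
    have ht'A : t' ∈ A := by
      refine ⟨⟨hc0.trans hct'.le, min_le_left _ _⟩, ?_⟩
      intro τ hτ
      rcases le_or_gt τ c with h | h
      · exact hcA.2 τ ⟨hτ.1, h⟩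
      · have hτb : τ ≤ b := hτ.2.trans (min_le_left _ _)
        have : τ ∈ Metric.ball c δ ∩ Set.Icc 0 b := by
          refine ⟨?_, ⟨hτ.1, hτb⟩⟩
          rw [Metric.mem_ball, Real.dist_eq, abs_of_pos (by linarith)]
          have : τ ≤ c + δ/2 := hτ.2.trans (min_le_right _ _)
          linarith
        exact (hball this).le
    exact absurd (le_csSup hAbdd ht'A) (not_le.mpr hct')
  intro t ht
  exact hcA.2 t ⟨ht.1, ht.2.trans_eq hcbeq.symm⟩


lemma bootstrap_key {ε Cs a Nt N0 : ℝ} {r : ℕ} (hr : 3 ≤ r) (hε : 0 < ε) (hCs : 0 < Cs)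
    (hsmall : Cs * 2 ^ (r + 4) * ε ≤ 1) (ha : 0 ≤ a) (ha2 : a ≤ 2 * ε)
    (h1 : |Nt - a ^ 2| ≤ Cs * a ^ 3) (h2 : |N0 - ε ^ 2| ≤ Cs * ε ^ 3)
    (h3 : |Nt - N0| ≤ Cs * (2 * ε) ^ (r + 3) * ε⁻¹ ^ r) :
    a ≤ (3 / 2) * ε := by
  have hpow : (2 * ε) ^ (r + 3) * ε⁻¹ ^ r = 2 ^ (r + 3) * ε ^ 3 := by
    rw [mul_pow, pow_add, inv_pow]
    field_simp
    ring
  set x : ℝ := 2 ^ (r + 3) with hx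
  have hx9 : (9 : ℝ) ≤ x := by
    calc (9:ℝ) ≤ 2 ^ 6 := by norm_num
    _ ≤ 2 ^ (r + 3) := pow_le_pow_right₀ one_le_two (by omega)
  have hx2 : (2:ℝ) ^ (r + 4) = 2 * x := by rw [hx, pow_succ]; ring
  rw [hx2] at hsmall
  have h3' : |Nt - N0| ≤ Cs * (x * ε ^ 3) := by
    calc |Nt - N0| ≤ Cs * (2 * ε) ^ (r + 3) * ε⁻¹ ^ r := h3
    _ = Cs * (x * ε ^ 3) := by rw [mul_assoc, hpow]
  have ha3 : a ^ 3 ≤ 8 * ε ^ 3 := by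
    calc a ^ 3 ≤ (2 * ε) ^ 3 := pow_le_pow_left₀ ha ha2 3
    _ = 8 * ε ^ 3 := by ring
  have e1 := abs_le.mp h1
  have e2 := abs_le.mp h2
  have e3 := abs_le.mp h3'
  have hsq : a ^ 2 ≤ 2 * ε ^ 2 := by nlinarith [hε.le, hCs.le, sq_nonneg ε, mul_pos hCs hε]
  nlinarith [sq_nonneg (a + 3 / 2 * ε), sq_nonneg (a - 3/2 * ε)]

/-- **Bootstrap lemma (abstract form of the proof of Corollary 3.2).** There is `ε* > 0`,
depending only on `C_s` and `r`, such that: for any `s ≥ 0`, `ε_s > 0`, `T > 0`, any curve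
`z ∈ C¹([-T,T], 𝒫_s)` and any continuous `N` with `|N(w) - ‖w‖_s²| ≤ C_s ‖w‖_s³` on the ball
`B(0,ε_s)` and `|d/dt N(z(t))| ≤ C_s ‖z(t)‖_s^{r+3}` whenever `z(t) ∈ B(0,ε_s)`, if
`‖z(0)‖_s = ε ≤ ε*` and `2ε < ε_s` then `‖z(t)‖_s ≤ 2ε` for all `t ∈ [-T,T]` with
`|t| ≤ ε^{-r}`. -/
theorem bootstrap (d : ℕ) (hd : 1 ≤ d) (r : ℕ) (hr : 3 ≤ r)
    (Cs : ℝ) (hCs : 0 < Cs) :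
    ∃ εstar > (0 : ℝ), ∀ s : ℝ, 0 ≤ s → ∀ εs : ℝ, 0 < εs → ∀ T : ℝ, 0 < T →
      ∀ (z : ℝ → Idx d → ℂ) (N : (Idx d → ℂ) → ℝ),
      (∀ t ∈ Set.Icc (-T) T, InPs s (z t)) →
      ContinuousOn (fun t => pnorm s (z t)) (Set.Icc (-T) T) →
      (∀ w : Idx d → ℂ, InPs s w → pnorm s w < εs →
        |N w - pnorm s w ^ 2| ≤ Cs * pnorm s w ^ 3) →
      (∀ t ∈ Set.Icc (-T) T, pnorm s (z t) < εs →
        ∃ D : ℝ, HasDerivAt (fun τ => N (z τ)) D t ∧ |D| ≤ Cs * pnorm s (z t) ^ (r + 3)) →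
      ∀ ε : ℝ, pnorm s (z 0) = ε → ε ≤ εstar → 2 * ε < εs →
        ∀ t ∈ Set.Icc (-T) T, |t| ≤ ε⁻¹ ^ r → pnorm s (z t) ≤ 2 * ε := by
  refine ⟨1 / (Cs * 2 ^ (r + 4)), by positivity, ?_⟩
  intro s hs εs hεs T hT z N hInPs hcont hN hderiv ε hε0 hεstar hεεs
  have hpn : ∀ w : Idx d → ℂ, 0 ≤ pnorm s w := fun w => Real.sqrt_nonneg _
  have hεnn : 0 ≤ ε := hε0 ▸ hpn (z 0)
  rcases eq_or_lt_of_le hεnn with h0 | hεpos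
  · -- degenerate case ε = 0
    intro t ht htle
    have habs : |t| ≤ 0 := by
      simpa [← h0, zero_pow (by omega : r ≠ 0)] using htle
    have ht0 : t = 0 := abs_eq_zero.mp (le_antisymm habs (abs_nonneg t))
    rw [ht0, hε0]; linarith
  -- main case ε > 0
  have hεsmall : Cs * 2 ^ (r + 4) * ε ≤ 1 := by
    have hpos : (0:ℝ) < Cs * 2 ^ (r + 4) := by positivity
    have h := (le_div_iff₀ hpos).mp hεstar
    calc Cs * 2 ^ (r + 4) * ε = ε * (Cs * 2 ^ (r + 4)) := by ring
    _ ≤ 1 := h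
  set b := min T (ε⁻¹ ^ r) with hb
  have hb0 : 0 < b := lt_min hT (by positivity)
  have hbT : b ≤ T := min_le_left _ _
  have hbε : b ≤ ε⁻¹ ^ r := min_le_right _ _
  have h0mem : (0:ℝ) ∈ Set.Icc (-T) T := ⟨by linarith, hT.le⟩
  have hεlt : ε < εs := by linarith
  have h2 : |N (z 0) - ε ^ 2| ≤ Cs * ε ^ 3 := by
    have := hN (z 0) (hInPs 0 h0mem) (by rw [hε0]; exact hεlt)
    rwa [hε0] at this
  have hCnn : 0 ≤ Cs * (2 * ε) ^ (r + 3) := by positivity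
  -- positive time direction
  have improvePos : ∀ t ∈ Set.Icc (0:ℝ) b,
      (∀ τ ∈ Set.Icc (0:ℝ) t, pnorm s (z τ) ≤ 2 * ε) → pnorm s (z t) ≤ (3/2) * ε := by
    intro t ht hbound
    have htT : ∀ τ ∈ Set.Icc (0:ℝ) t, τ ∈ Set.Icc (-T) T := by
      intro τ hτ
      exact ⟨by linarith [hτ.1], le_trans hτ.2 (ht.2.trans hbT)⟩
    have hEx : ∀ τ ∈ Set.Icc (0:ℝ) t, ∃ D, HasDerivAt (fun u => N (z u)) D τ ∧
        |D| ≤ Cs * (2 * ε) ^ (r + 3) := by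
      intro τ hτ
      obtain ⟨D, hD, hDle⟩ := hderiv τ (htT τ hτ) (lt_of_le_of_lt (hbound τ hτ) hεεs)
      refine ⟨D, hD, hDle.trans ?_⟩
      exact mul_le_mul_of_nonneg_left
        (pow_le_pow_left₀ (hpn (z τ)) (hbound τ hτ) (r + 3)) hCs.le
    choose! DD hDD hDle using hEx
    have hkey := Convex.norm_image_sub_le_of_norm_hasDerivWithin_le
      (f := fun u => N (z u)) (f' := DD) (C := Cs * (2 * ε) ^ (r + 3))
      (fun x hx => (hDD x hx).hasDerivWithinAt)
      (fun x hx => by rw [Real.norm_eq_abs]; exact hDle x hx)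
      (convex_Icc 0 t) (Set.left_mem_Icc.mpr ht.1) (Set.right_mem_Icc.mpr ht.1)
    have h3 : |N (z t) - N (z 0)| ≤ Cs * (2 * ε) ^ (r + 3) * ε⁻¹ ^ r := by
      calc |N (z t) - N (z 0)| ≤ Cs * (2 * ε) ^ (r + 3) * |t - 0| := by
            simpa [Real.norm_eq_abs] using hkey
      _ ≤ Cs * (2 * ε) ^ (r + 3) * ε⁻¹ ^ r := by
            refine mul_le_mul_of_nonneg_left ?_ hCnn
            rw [sub_zero, abs_of_nonneg ht.1]
            exact ht.2.trans hbε
    have h1 : |N (z t) - pnorm s (z t) ^ 2| ≤ Cs * pnorm s (z t) ^ 3 :=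
      hN (z t) (hInPs t (htT t (Set.right_mem_Icc.mpr ht.1)))
        (lt_of_le_of_lt (hbound t (Set.right_mem_Icc.mpr ht.1)) hεεs)
    exact bootstrap_key hr hεpos hCs hεsmall (hpn (z t))
      (hbound t (Set.right_mem_Icc.mpr ht.1)) h1 h2 h3
  -- negative time direction
  have improveNeg : ∀ t ∈ Set.Icc (0:ℝ) b,
      (∀ τ ∈ Set.Icc (0:ℝ) t, pnorm s (z (-τ)) ≤ 2 * ε) → pnorm s (z (-t)) ≤ (3/2) * ε := by
    intro t ht hbound
    have htT : ∀ τ ∈ Set.Icc (0:ℝ) t, -τ ∈ Set.Icc (-T) T := by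
      intro τ hτ
      constructor
      · have : τ ≤ T := le_trans hτ.2 (ht.2.trans hbT)
        linarith
      · linarith [hτ.1]
    have hEx : ∀ τ ∈ Set.Icc (0:ℝ) t, ∃ D, HasDerivAt (fun u => N (z (-u))) D τ ∧
        |D| ≤ Cs * (2 * ε) ^ (r + 3) := by
      intro τ hτ
      obtain ⟨D, hD, hDle⟩ := hderiv (-τ) (htT τ hτ) (lt_of_le_of_lt (hbound τ hτ) hεεs)
      refine ⟨D * (-1), ?_, ?_⟩
      · have := HasDerivAt.comp τ hD (hasDerivAt_neg τ)
        simpa [Function.comp_def] using this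
      · rw [mul_neg_one, abs_neg]
        refine hDle.trans ?_
        exact mul_le_mul_of_nonneg_left
          (pow_le_pow_left₀ (hpn (z (-τ))) (hbound τ hτ) (r + 3)) hCs.le
    choose! DD hDD hDle using hEx
    have hkey := Convex.norm_image_sub_le_of_norm_hasDerivWithin_le
      (f := fun u => N (z (-u))) (f' := DD) (C := Cs * (2 * ε) ^ (r + 3))
      (fun x hx => (hDD x hx).hasDerivWithinAt)
      (fun x hx => by rw [Real.norm_eq_abs]; exact hDle x hx)
      (convex_Icc 0 t) (Set.left_mem_Icc.mpr ht.1) (Set.right_mem_Icc.mpr ht.1)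
    have h3 : |N (z (-t)) - N (z 0)| ≤ Cs * (2 * ε) ^ (r + 3) * ε⁻¹ ^ r := by
      calc |N (z (-t)) - N (z 0)| ≤ Cs * (2 * ε) ^ (r + 3) * |t - 0| := by
            simpa [Real.norm_eq_abs, neg_zero] using hkey
      _ ≤ Cs * (2 * ε) ^ (r + 3) * ε⁻¹ ^ r := by
            refine mul_le_mul_of_nonneg_left ?_ hCnn
            rw [sub_zero, abs_of_nonneg ht.1]
            exact ht.2.trans hbε
    have h1 : |N (z (-t)) - pnorm s (z (-t)) ^ 2| ≤ Cs * pnorm s (z (-t)) ^ 3 :=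
      hN (z (-t)) (hInPs (-t) (htT t (Set.right_mem_Icc.mpr ht.1)))
        (lt_of_le_of_lt (hbound t (Set.right_mem_Icc.mpr ht.1)) hεεs)
    exact bootstrap_key hr hεpos hCs hεsmall (hpn (z (-t)))
      (hbound t (Set.right_mem_Icc.mpr ht.1)) h1 h2 h3
  have hsubPos : Set.Icc (0:ℝ) b ⊆ Set.Icc (-T) T := fun x hx =>
    ⟨by linarith [hx.1], hx.2.trans hbT⟩
  have hcontPos : ContinuousOn (fun t => pnorm s (z t)) (Set.Icc 0 b) := hcont.mono hsubPos
  have hcontNeg : ContinuousOn (fun t => pnorm s (z (-t))) (Set.Icc 0 b) := by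
    have hmt : Set.MapsTo (fun t : ℝ => -t) (Set.Icc 0 b) (Set.Icc (-T) T) := by
      intro x hx
      simp only [Set.mem_Icc]
      constructor <;> linarith [hx.1, hx.2.trans hbT]
    have := ContinuousOn.comp (g := fun t => pnorm s (z t)) (f := fun t : ℝ => -t)
      hcont continuous_neg.continuousOn hmt
    simpa [Function.comp_def] using this
  have h0le : pnorm s (z 0) ≤ 2 * ε := by rw [hε0]; linarith
  have resPos := bootstrap_aux hεpos hcontPos h0le improvePos
  have resNeg := bootstrap_aux hεpos hcontNeg (by simpa using h0le) improveNeg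
  intro t ht htabs
  rcases le_or_gt 0 t with hpos | hneg
  · exact resPos t ⟨hpos, le_min ht.2 (by rwa [abs_of_nonneg hpos] at htabs)⟩
  · have hmem : -t ∈ Set.Icc (0:ℝ) b :=
      ⟨by linarith, le_min (by linarith [ht.1]) (by rwa [abs_of_neg hneg] at htabs)⟩
    simpa using resNeg (-t) hmem
end
end

section
/- Lemma 4.3 (resolution of the homological equation). Let k ≥ 2 be an integer, let γ ≥ 0, and let ω = (ω_j)_{j∈𝒵} ∈ ℝ^𝒵 satisfy ω_{j̄} = −ω_j and the non-resonance bound at order k: there exist γ₀ > 0 and α > 0 with |Ω(𝐣)| ≥ γ₀/μ(𝐣)^α for every 𝐣 ∈ 𝒵^k except when 𝐣̄ is a permutation of 𝐣. Let G(z) = Σ_{𝐣∈𝒵^k} a_𝐣 z_{j₁}⋯z_{j_k} be an odd homogeneous polynomial of degree k in the class Γ^γ_k (so a_{𝐣̄} = −a_𝐣 for all 𝐣). Then the homological equation ∂_ω N = G has a solution N(z) = Σ_{𝐣∈𝒵^k} b_𝐣 z_{j₁}⋯z_{j_k}, i.e. Ω(𝐣) b_𝐣 = a_𝐣 for every 𝐣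 ∈ 𝒵^k, given by b_𝐣 = Ω(𝐣)^{−1} a_𝐣 when Ω(𝐣) ≠ 0 and b_𝐣 = 0 otherwise; this N belongs to Γ^{γ+α}_k, is even (b_{𝐣̄} = b_𝐣), has real coefficients whenever all a_𝐣 are real, and its coefficients b_𝐣 are uniquely determined for every 𝐣 with Ω(𝐣) ≠ 0. -/
open scoped BigOperators

noncomputable section

namespace Paper

attribute [local instance] Classical.propDecidable

variable {d : ℕ}

end Paper

open Paper

section Aux

variable {d : ℕ}

lemma one_le_mem_sw {k : ℕ} (J : Fin k → Idx d) : ∀ x ∈ sw J, 1 ≤ x := by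
  intro x hx
  have hmem : x ∈ List.ofFn fun i => wt (J i) :=
    ((List.perm_insertionSort (· ≥ ·) _).mem_iff).mp hx
  obtain ⟨i, hi⟩ := List.mem_ofFn.mp hmem
  rw [← hi]; exact le_max_left _ _

lemma sw_length' {k : ℕ} (J : Fin k → Idx d) : (sw J).length = k := by
  simp [sw]

lemma one_le_getD_sw {k : ℕ} (J : Fin k → Idx d) (n : ℕ) : 1 ≤ (sw J).getD n 1 := by
  rcases lt_or_ge n (sw J).length with h | h
  · rw [List.getD_eq_getElem _ _ h]
    exact one_le_mem_sw J _ (List.getElem_mem h)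
  · rw [List.getD_eq_default _ _ h]

lemma one_le_mu' {k : ℕ} (J : Fin k → Idx d) : 1 ≤ mu J := one_le_getD_sw J 2

lemma S_nonneg' {k : ℕ} (hk : 2 ≤ k) (J : Fin k → Idx d) : 0 ≤ S J := by
  have hl : (sw J).length = k := sw_length' J
  have h0 : 0 < (sw J).length := by omega
  have h1 : 1 < (sw J).length := by omega
  have hsort : (sw J).Pairwise (· ≥ ·) := List.pairwise_insertionSort _ _
  have hrel : (sw J).get ⟨0, h0⟩ ≥ (sw J).get ⟨1, h1⟩ :=
    List.Pairwise.rel_get_of_lt hsort (by simp)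
  unfold S
  rw [List.getD_eq_getElem _ _ h0, List.getD_eq_getElem _ _ h1]
  simpa [List.get_eq_getElem, sub_nonneg] using hrel

lemma Om_barT' (ω : Idx d → ℝ) (hω : ∀ j : Idx d, ω (bar j) = -ω j) {k : ℕ}
    (J : Fin k → Idx d) : Om ω (barT J) = - Om ω J := by
  unfold Om barT
  simp [hω]

end Aux

/-- **Lemma 4.3 (resolution of the homological equation).** Let `k ≥ 2`, `γ ≥ 0`, and let `ω`
satisfy `ω_{j̄} = -ω_j` together with the non-resonance bound of exponents `γ₀, α` at order
`k`. If `G(z) = Σ_𝐣 a_𝐣 z_𝐣` is an odd homogeneous polynomial of degree `k` (with symmetric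
coefficients) in `Γ^γ_k`, then the coefficients `b_𝐣 = Ω(𝐣)⁻¹ a_𝐣` (and `b_𝐣 = 0` when
`Ω(𝐣) = 0`) solve `Ω(𝐣) b_𝐣 = a_𝐣` for all `𝐣`; they satisfy the `Γ^{γ+α}_k` bound, define
an even polynomial, are real when the `a_𝐣` are real, and are uniquely determined whenever
`Ω(𝐣) ≠ 0`. -/
theorem lemma43_homological (d k : ℕ) (hd : 1 ≤ d) (hk : 2 ≤ k)
    (s γ γ₀ α : ℝ) (hs : 0 ≤ s) (hγ : 0 ≤ γ) (hγ₀ : 0 < γ₀) (hα : 0 < α)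
    (ω : Idx d → ℝ) (hωsym : ∀ j : Idx d, ω (bar j) = -ω j)
    (hnr : ∀ J : Fin k → Idx d, ¬ IsPermOf (barT J) J → γ₀ / mu J ^ α ≤ |Om ω J|)
    (Ca : ℝ) (hCa : 0 < Ca) (a : (Fin k → Idx d) → ℂ)
    (hsym : ∀ (J : Fin k → Idx d) (σ : Equiv.Perm (Fin k)), a (J ∘ σ) = a J)
    (hodd : ∀ J : Fin k → Idx d, a (barT J) = -a J)
    (ha : ∀ J : Fin k → Idx d, ‖a J‖ ≤ Ca * mu J ^ γ * beta J ^ s / (1 + S J) ^ 2) :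
    ∃ b : (Fin k → Idx d) → ℂ,
      (∀ J : Fin k → Idx d, b J = if Om ω J = 0 then 0 else a J / (Om ω J : ℂ)) ∧
      (∀ J : Fin k → Idx d, (Om ω J : ℂ) * b J = a J) ∧
      (∃ C > (0 : ℝ), ∀ J : Fin k → Idx d,
        ‖b J‖ ≤ C * mu J ^ (γ + α) * beta J ^ s / (1 + S J) ^ 2) ∧
      (∀ J : Fin k → Idx d, b (barT J) = b J) ∧
      ((∀ J : Fin k → Idx d, (a J).im = 0) → ∀ J : Fin k → Idx d, (b J).im = 0) ∧
      (∀ b' : (Fin k → Idx d) → ℂ, (∀ J : Fin k → Idx d, (Om ω J : ℂ) * b' J = a J) →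
        ∀ J : Fin k → Idx d, Om ω J ≠ 0 → b' J = b J) := by
  classical
  set b : (Fin k → Idx d) → ℂ :=
    fun J => if Om ω J = 0 then 0 else a J / (Om ω J : ℂ) with hb
  -- if `barT J` is a permutation of `J` then `a J = 0`
  have hperm0 : ∀ J : Fin k → Idx d, IsPermOf (barT J) J → a J = 0 := by
    intro J ⟨σ, hσ⟩
    have h1 : a (barT J) = a J := by rw [hσ, hsym]
    have h2 : a J = - a J := by have h2 := hodd J; rw [h1] at h2; exact h2
    have : (2 : ℂ) * a J = 0 := by linear_combination h2
    simpa using this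
  have hμpos : ∀ J : Fin k → Idx d, (0 : ℝ) < mu J := fun J =>
    lt_of_lt_of_le one_pos (one_le_mu' J)
  have ha0 : ∀ J : Fin k → Idx d, Om ω J = 0 → a J = 0 := by
    intro J hJ
    by_cases hp : IsPermOf (barT J) J
    · exact hperm0 J hp
    · exfalso
      have h := hnr J hp
      rw [hJ, abs_zero] at h
      have hμ : (0 : ℝ) < mu J ^ α := Real.rpow_pos_of_pos (hμpos J) α
      have : 0 < γ₀ / mu J ^ α := div_pos hγ₀ hμ
      linarith
  refine ⟨b, fun J => rfl, ?_, ?_, ?_, ?_, ?_⟩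
  · -- solves the homological equation
    intro J
    by_cases h : Om ω J = 0
    · simp [hb, h, ha0 J h]
    · have hΩ : (Om ω J : ℂ) ≠ 0 := Complex.ofReal_ne_zero.mpr h
      simp only [hb, if_neg h]
      field_simp
  · -- the Γ^{γ+α}_k bound
    refine ⟨Ca / γ₀, div_pos hCa hγ₀, ?_⟩
    intro J
    have hμ1 := one_le_mu' J
    have hμ0 := hμpos J
    have hS := S_nonneg' hk J
    have hβ : (0 : ℝ) ≤ beta J :=
      le_trans zero_le_one (one_le_mul_of_one_le_of_one_le
        (one_le_getD_sw J 0) (one_le_getD_sw J 1))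
    have hRHS : (0 : ℝ) ≤ Ca / γ₀ * mu J ^ (γ + α) * beta J ^ s / (1 + S J) ^ 2 := by
      have h1 : 0 < (1 + S J) ^ 2 := by positivity
      have h2 : 0 ≤ mu J ^ (γ + α) := Real.rpow_nonneg (le_of_lt hμ0) _
      have h3 : 0 ≤ beta J ^ s := Real.rpow_nonneg hβ _
      positivity
    by_cases h : Om ω J = 0
    · simp only [hb, if_pos h, norm_zero]; exact hRHS
    by_cases hp : IsPermOf (barT J) J
    · simp only [hb, if_neg h, hperm0 J hp, zero_div, norm_zero]; exact hRHS
    have hnrJ := hnr J hp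
    have hμα : (0 : ℝ) < mu J ^ α := Real.rpow_pos_of_pos hμ0 α
    have hdiv : 0 < γ₀ / mu J ^ α := div_pos hγ₀ hμα
    have hΩpos : 0 < |Om ω J| := lt_of_lt_of_le hdiv hnrJ
    have hnorm : ‖b J‖ = ‖a J‖ / |Om ω J| := by
      simp [hb, if_neg h, norm_div, Complex.norm_real, Real.norm_eq_abs]
    rw [hnorm]
    calc ‖a J‖ / |Om ω J| ≤ ‖a J‖ / (γ₀ / mu J ^ α) := by
          gcongr
      _ = ‖a J‖ * mu J ^ α / γ₀ := by
          field_simp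
      _ ≤ (Ca * mu J ^ γ * beta J ^ s / (1 + S J) ^ 2) * mu J ^ α / γ₀ := by
          gcongr
          exact ha J
      _ = Ca / γ₀ * mu J ^ (γ + α) * beta J ^ s / (1 + S J) ^ 2 := by
          rw [Real.rpow_add hμ0]
          field_simp
  · -- evenness
    intro J
    have hOb : Om ω (barT J) = - Om ω J := Om_barT' ω hωsym J
    by_cases h : Om ω J = 0
    · simp [hb, h, hOb]
    · have h' : Om ω (barT J) ≠ 0 := by rw [hOb]; simpa using h
      simp only [hb, if_neg h, if_neg h', hOb, hodd J, Complex.ofReal_neg, neg_div_neg_eq]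
  · -- reality
    intro him J
    by_cases h : Om ω J = 0
    · simp [hb, h]
    · simp [hb, if_neg h, Complex.div_im, him J]
  · -- uniqueness
    intro b' hb' J hJ
    have hΩ : (Om ω J : ℂ) ≠ 0 := Complex.ofReal_ne_zero.mpr hJ
    simp only [hb, if_neg hJ]
    rw [eq_div_iff hΩ]
    linear_combination hb' J
end
end

section
/- Pointwise estimate (siduele) from the proof of Lemma 4.2. Let γ, ν ≥ 0 be real numbers, m, n ≥ 2 integers, and s ≥ max(γ, ν + 4). Then there exist an integer M ≥ 0 and a constant C > 0 such that, uniformly with respect to k ∈ 𝒵, ℓ ∈ 𝒵^m and 𝐣 ∈ 𝒵^n, one has [ μ(k,ℓ) / (μ(k,ℓ) + S(k,ℓ)) ]^M · μ(k,ℓ)^{ν+4} · μ(k,𝐣)^γ · β(k,𝐣)^s ≤ C μ(ℓ,𝐣)^{γ+ν+4} β(ℓ,𝐣)^s, where (k,ℓ), (k,𝐣) and (ℓ,𝐣) denote concatenated tuples. (One may take M = s, with C = 2^s.) -/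
open scoped BigOperators

noncomputable section

namespace Paper

attribute [local instance] Classical.propDecidable

variable {d : ℕ}

end Paper

open Paper


section SiduleAux

open List

/-- the predicate `x ≤ y` as a `Bool`. -/
noncomputable def cge (x y : ℝ) : Bool := decide (x ≤ y)

lemma cge_iff {x y : ℝ} : cge x y = true ↔ x ≤ y := by simp [cge]

variable {l : List ℝ}

lemma sid_one_le_getD (h1 : ∀ x ∈ l, (1:ℝ) ≤ x) (i : ℕ) : 1 ≤ l.getD i 1 := by
  rcases Nat.lt_or_ge i l.length with h | h
  · rw [List.getD_eq_getElem l 1 h]; exact h1 _ (List.getElem_mem h)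
  · rw [List.getD_eq_default l 1 h]

lemma sid_getElem_anti (hs : l.Pairwise (· ≥ ·)) {i j : ℕ} (hij : i ≤ j) (hj : j < l.length) :
    l[j] ≤ l[i]'(Nat.lt_of_le_of_lt hij hj) := by
  have hi : i < l.length := Nat.lt_of_le_of_lt hij hj
  exact hs.rel_get_of_le (a := ⟨i, hi⟩) (b := ⟨j, hj⟩) hij

lemma sid_getD_anti (hs : l.Pairwise (· ≥ ·)) (h1 : ∀ x ∈ l, (1:ℝ) ≤ x) {i j : ℕ} (hij : i ≤ j) :
    l.getD j 1 ≤ l.getD i 1 := by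
  rcases Nat.lt_or_ge j l.length with h | h
  · have hi : i < l.length := Nat.lt_of_le_of_lt hij h
    rw [List.getD_eq_getElem l 1 h, List.getD_eq_getElem l 1 hi]
    exact sid_getElem_anti hs hij h
  · rw [List.getD_eq_default l 1 h]; exact sid_one_le_getD h1 i

lemma sid_count_ge (hs : l.Pairwise (· ≥ ·)) {i : ℕ} (hi : i < l.length) {x : ℝ}
    (hx : x ≤ l.getD i 1) : i + 1 ≤ l.countP (cge x) := by
  rw [List.getD_eq_getElem l 1 hi] at hx
  have key : ∀ a ∈ l.take (i+1), cge x a := by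
    intro a ha
    obtain ⟨j, hj, rfl⟩ := List.mem_iff_getElem.1 ha
    have hjl : j ≤ i := by
      have := hj; rw [List.length_take] at this; omega
    rw [List.getElem_take, cge_iff]
    exact le_trans hx (sid_getElem_anti hs hjl hi)
  have h1 : (l.take (i+1)).countP (cge x) = (l.take (i+1)).length :=
    List.countP_eq_length.2 key
  have h2 : (l.take (i+1)).length = i+1 := by rw [List.length_take]; omega
  calc i + 1 = (l.take (i+1)).countP (cge x) := by rw [h1, h2]
    _ ≤ l.countP (cge x) := (List.take_sublist _ _).countP_le

lemma sid_le_getD (hs : l.Pairwise (· ≥ ·)) {i : ℕ} {x : ℝ}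
    (hc : i + 1 ≤ l.countP (cge x)) : x ≤ l.getD i 1 := by
  have hi : i < l.length := lt_of_lt_of_le (Nat.lt_succ_self i)
    (le_trans hc l.countP_le_length)
  rw [List.getD_eq_getElem l 1 hi]
  by_contra hlt
  push_neg at hlt
  have h0 : (l.drop i).countP (cge x) = 0 := by
    rw [List.countP_eq_zero]
    intro a ha
    obtain ⟨j, hj, rfl⟩ := List.mem_iff_getElem.1 ha
    have hij : i + j < l.length := by
      have := hj; rw [List.length_drop] at this; omega
    rw [List.getElem_drop]
    simp only [cge, decide_eq_true_eq]
    push_neg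
    exact lt_of_le_of_lt (sid_getElem_anti hs (Nat.le_add_right i j) hij) hlt
  have hle : l.countP (cge x) ≤ i := by
    conv_lhs => rw [← List.take_append_drop i l]
    rw [List.countP_append, h0, Nat.add_zero]
    exact le_trans List.countP_le_length (by rw [List.length_take]; omega)
  omega

variable {d : ℕ}

lemma sid_one_le_wt (j : Idx d) : (1:ℝ) ≤ wt j := le_max_left _ _

lemma sid_sw_perm {r : ℕ} (T : Fin r → Idx d) : sw T ~ List.ofFn (fun i => wt (T i)) :=
  List.perm_insertionSort _ _

lemma sid_sw_sorted {r : ℕ} (T : Fin r → Idx d) : (sw T).Pairwise (· ≥ ·) :=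
  List.pairwise_insertionSort _ _

lemma sid_sw_length {r : ℕ} (T : Fin r → Idx d) : (sw T).length = r := by
  rw [Paper.sw, List.length_insertionSort, List.length_ofFn]

lemma sid_sw_one_le {r : ℕ} (T : Fin r → Idx d) : ∀ x ∈ sw T, (1:ℝ) ≤ x := by
  intro x hx
  have hx' := (sid_sw_perm T).mem_iff.1 hx
  rw [List.mem_ofFn] at hx'
  obtain ⟨i, rfl⟩ := hx'
  exact sid_one_le_wt _

/-- `i`-th largest weight of the tuple `T` (default `1`). -/
noncomputable def tt {d : ℕ} (i : ℕ) {r : ℕ} (T : Fin r → Idx d) : ℝ := (sw T).getD i 1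

lemma sid_one_le_tt {r : ℕ} (i : ℕ) (T : Fin r → Idx d) : 1 ≤ tt i T :=
  sid_one_le_getD (sid_sw_one_le T) i

lemma sid_tt_anti {r : ℕ} {i j : ℕ} (hij : i ≤ j) (T : Fin r → Idx d) : tt j T ≤ tt i T :=
  sid_getD_anti (sid_sw_sorted T) (sid_sw_one_le T) hij

lemma sid_le_tt {r : ℕ} {i : ℕ} {x : ℝ} (T : Fin r → Idx d)
    (hc : i + 1 ≤ (sw T).countP (cge x)) : x ≤ tt i T :=
  sid_le_getD (sid_sw_sorted T) hc

lemma sid_count_of_le_tt {r : ℕ} {i : ℕ} {x : ℝ} (T : Fin r → Idx d)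
    (hi : i < r) (hx : x ≤ tt i T) : i + 1 ≤ (sw T).countP (cge x) :=
  sid_count_ge (sid_sw_sorted T) (by rw [sid_sw_length]; exact hi) hx

lemma sid_countP_append {m n : ℕ} (L : Fin m → Idx d) (J : Fin n → Idx d) (p : ℝ → Bool) :
    (sw (Fin.append L J)).countP p = (sw L).countP p + (sw J).countP p := by
  have e : (List.ofFn fun i => wt (Fin.append L J i))
      = (List.ofFn fun i => wt (L i)) ++ (List.ofFn fun i => wt (J i)) := by
    rw [← List.ofFn_fin_append]
    congr 1
    funext i
    induction i using Fin.addCases with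
    | left i => simp [Fin.append_left]
    | right i => simp [Fin.append_right]
  rw [(sid_sw_perm (Fin.append L J)).countP_eq, e, List.countP_append,
      ← (sid_sw_perm L).countP_eq, ← (sid_sw_perm J).countP_eq]

lemma sid_tt_append_left {m n : ℕ} {i : ℕ} (L : Fin m → Idx d) (J : Fin n → Idx d)
    (hi : i < m) : tt i L ≤ tt i (Fin.append L J) := by
  apply sid_le_tt
  rw [sid_countP_append]
  have h := sid_count_of_le_tt L hi (le_refl (tt i L))
  omega

lemma sid_tt_append_right {m n : ℕ} {i : ℕ} (L : Fin m → Idx d) (J : Fin n → Idx d)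
    (hi : i < n) : tt i J ≤ tt i (Fin.append L J) := by
  apply sid_le_tt
  rw [sid_countP_append]
  have h := sid_count_of_le_tt J hi (le_refl (tt i J))
  omega

lemma sid_tt_append_mix {m n : ℕ} {i j : ℕ} (L : Fin m → Idx d) (J : Fin n → Idx d)
    (hi : i < m) (hj : j < n) {x : ℝ} (hL : x ≤ tt i L) (hJ : x ≤ tt j J) :
    x ≤ tt (i + j + 1) (Fin.append L J) := by
  apply sid_le_tt
  rw [sid_countP_append]
  have h1 := sid_count_of_le_tt L hi hL
  have h2 := sid_count_of_le_tt J hj hJ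
  omega

lemma sid_head_ordIns (w : ℝ) (hw : 1 ≤ w) (t : List ℝ) :
    (List.orderedInsert (· ≥ ·) w t).getD 0 1 = max (t.getD 0 1) w := by
  cases t with
  | nil => simp [List.orderedInsert, max_eq_right hw]
  | cons c t' =>
    simp only [List.orderedInsert]
    split_ifs with h
    · simp [max_eq_right h]
    · push_neg at h
      simp [max_eq_left h.le]

lemma sid_sw_cons {r : ℕ} (k : Idx d) (T : Fin r → Idx d) :
    sw (Fin.cons k T) = List.orderedInsert (· ≥ ·) (wt k) (sw T) := by
  have e : (List.ofFn fun i => wt ((Fin.cons k T : Fin (r+1) → Idx d) i))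
      = wt k :: (List.ofFn fun i => wt (T i)) := by
    simp [List.ofFn_succ]
  rw [Paper.sw, e]
  rfl

lemma sid_tt_cons {r : ℕ} (hr : 2 ≤ r) (k : Idx d) (T : Fin r → Idx d) :
    tt 0 (Fin.cons k T) = max (wt k) (tt 0 T) ∧
    tt 1 (Fin.cons k T) = max (tt 1 T) (min (wt k) (tt 0 T)) ∧
    tt 2 (Fin.cons k T) = max (tt 2 T) (min (wt k) (tt 1 T)) := by
  have hw : 1 ≤ wt k := sid_one_le_wt k
  have hlen : 2 ≤ (sw T).length := by rw [sid_sw_length]; exact hr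
  have hs := sid_sw_sorted T
  have h1 := sid_sw_one_le T
  rcases hsw : sw T with _ | ⟨a, rest⟩
  · rw [hsw] at hlen; simp at hlen
  rcases rest with _ | ⟨b, t⟩
  · rw [hsw] at hlen; simp at hlen
  rw [hsw] at hs h1
  have hab : b ≤ a := (List.pairwise_cons.1 hs).1 b (by simp)
  have hb1 : (1:ℝ) ≤ b := h1 b (by simp)
  have ha1 : (1:ℝ) ≤ a := h1 a (by simp)
  have hcb : t.getD 0 1 ≤ b := by
    cases t with
    | nil => simpa using hb1
    | cons c t' =>
      simpa using (List.pairwise_cons.1 (List.pairwise_cons.1 hs).2).1 c (by simp)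
  simp only [tt, sid_sw_cons, hsw]
  -- values of T's tt
  have e0 : (a :: b :: t).getD 0 1 = a := rfl
  have e1 : (a :: b :: t).getD 1 1 = b := rfl
  have e2 : (a :: b :: t).getD 2 1 = t.getD 0 1 := rfl
  rw [e0, e1, e2]
  rcases le_or_gt a (wt k) with hcase | hcase
  · have e : List.orderedInsert (· ≥ ·) (wt k) (a::b::t) = wt k :: a :: b :: t := by
      simp [List.orderedInsert, hcase]
    rw [e]
    refine ⟨?_, ?_, ?_⟩
    · simp [max_eq_left hcase]
    · show a = max b (min (wt k) a)
      rw [min_eq_right hcase, max_eq_right hab]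
    · show b = max (t.getD 0 1) (min (wt k) b)
      rw [min_eq_right (le_trans hab hcase), max_eq_right hcb]
  · rcases le_or_gt b (wt k) with hcase2 | hcase2
    · have e : List.orderedInsert (· ≥ ·) (wt k) (a::b::t) = a :: wt k :: b :: t := by
        simp [List.orderedInsert, not_le.2 hcase, hcase2]
      rw [e]
      refine ⟨?_, ?_, ?_⟩
      · show a = max (wt k) a
        rw [max_eq_right hcase.le]
      · show wt k = max b (min (wt k) a)
        rw [min_eq_left hcase.le, max_eq_right hcase2]
      · show b = max (t.getD 0 1) (min (wt k) b)
        rw [min_eq_right hcase2, max_eq_right hcb]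
    · have e : List.orderedInsert (· ≥ ·) (wt k) (a::b::t)
          = a :: b :: List.orderedInsert (· ≥ ·) (wt k) t := by
        simp [List.orderedInsert, not_le.2 hcase, not_le.2 hcase2]
      rw [e]
      refine ⟨?_, ?_, ?_⟩
      · show a = max (wt k) a
        rw [max_eq_right hcase.le]
      · show b = max b (min (wt k) a)
        rw [min_eq_left (le_trans hcase2.le hab), max_eq_left hcase2.le]
      · show (List.orderedInsert (· ≥ ·) (wt k) t).getD 0 1
            = max (t.getD 0 1) (min (wt k) b)
        rw [sid_head_ordIns (wt k) hw t, min_eq_left hcase2.le]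

lemma sid_combine (θ P Q b1 D B a g s : ℝ)
    (hθ0 : 0 < θ) (hθ1 : θ ≤ 1) (hP : 1 ≤ P) (hQ : 1 ≤ Q) (hb : 1 ≤ b1)
    (hD : 1 ≤ D) (hB : 1 ≤ B)
    (hi : θ * b1 ≤ B) (hA : θ * (P * b1) ≤ D * B) (hBB : θ * (Q * b1) ≤ D * B)
    (hPQ : P ≤ D ∨ Q ≤ D)
    (ha : 0 ≤ a) (hg : 0 ≤ g) (has : a ≤ s) (hgs : g ≤ s) :
    θ ^ s * P ^ a * Q ^ g * b1 ^ s ≤ D ^ (a + g) * B ^ s := by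
  have hP0 : (0:ℝ) < P := lt_of_lt_of_le one_pos hP
  have hQ0 : (0:ℝ) < Q := lt_of_lt_of_le one_pos hQ
  have hb0 : (0:ℝ) < b1 := lt_of_lt_of_le one_pos hb
  have hD0 : (0:ℝ) < D := lt_of_lt_of_le one_pos hD
  have hB0 : (0:ℝ) < B := lt_of_lt_of_le one_pos hB
  have hX0 : (0:ℝ) ≤ θ * P * b1 := by positivity
  have hY0 : (0:ℝ) ≤ θ * Q * b1 := by positivity
  have hZ0 : (0:ℝ) ≤ θ * b1 := by positivity
  have hA' : θ * P * b1 ≤ D * B := by linarith [hA]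
  have hBB' : θ * Q * b1 ≤ D * B := by linarith [hBB]
  have mr : ∀ x y : ℝ, 0 ≤ x → 0 ≤ y → ∀ z : ℝ, (x*y)^z = x^z*y^z :=
    fun x y hx hy z => Real.mul_rpow hx hy
  by_cases hc : a + g ≤ s
  · have e1 : θ ^ s * P ^ a * Q ^ g * b1 ^ s
        = (θ*P*b1)^a * ((θ*Q*b1)^g * (θ*b1)^(s-a-g)) := by
      rw [mr (θ*P) b1 (by positivity) hb0.le a, mr θ P hθ0.le hP0.le a,
          mr (θ*Q) b1 (by positivity) hb0.le g, mr θ Q hθ0.le hQ0.le g,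
          mr θ b1 hθ0.le hb0.le (s-a-g)]
      have eθ : θ^a * θ^g * θ^(s-a-g) = θ^s := by
        rw [← Real.rpow_add hθ0, ← Real.rpow_add hθ0]; congr 1; ring
      have eb : b1^a * b1^g * b1^(s-a-g) = b1^s := by
        rw [← Real.rpow_add hb0, ← Real.rpow_add hb0]; congr 1; ring
      rw [← eθ, ← eb]; ring
    have e2 : D ^ (a+g) * B ^ s = (D*B)^a * ((D*B)^g * B^(s-a-g)) := by
      rw [mr D B hD0.le hB0.le a, mr D B hD0.le hB0.le g]
      have eD : D^a * D^g = D^(a+g) := (Real.rpow_add hD0 _ _).symm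
      have eB : B^a * B^g * B^(s-a-g) = B^s := by
        rw [← Real.rpow_add hB0, ← Real.rpow_add hB0]; congr 1; ring
      rw [← eD, ← eB]; ring
    rw [e1, e2]
    have h1 : (θ*P*b1)^a ≤ (D*B)^a := Real.rpow_le_rpow hX0 hA' ha
    have h2 : (θ*Q*b1)^g ≤ (D*B)^g := Real.rpow_le_rpow hY0 hBB' hg
    have h3 : (θ*b1)^(s-a-g) ≤ B^(s-a-g) := Real.rpow_le_rpow hZ0 hi (by linarith)
    exact mul_le_mul h1 (mul_le_mul h2 h3 (by positivity) (by positivity))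
      (by positivity) (by positivity)
  · push_neg at hc
    rcases hPQ with hPD | hQD
    · have e1 : θ ^ s * P ^ a * Q ^ g * b1 ^ s
          = P^(a+g-s) * ((θ*P*b1)^(s-g) * (θ*Q*b1)^g) := by
        rw [mr (θ*P) b1 (by positivity) hb0.le (s-g), mr θ P hθ0.le hP0.le (s-g),
            mr (θ*Q) b1 (by positivity) hb0.le g, mr θ Q hθ0.le hQ0.le g]
        have eθ : θ^(s-g) * θ^g = θ^s := by
          rw [← Real.rpow_add hθ0]; congr 1; ring
        have eb : b1^(s-g) * b1^g = b1^s := by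
          rw [← Real.rpow_add hb0]; congr 1; ring
        have eP : P^(a+g-s) * P^(s-g) = P^a := by
          rw [← Real.rpow_add hP0]; congr 1; ring
        rw [← eθ, ← eb, ← eP]; ring
      have e2 : D ^ (a+g) * B ^ s = D^(a+g-s) * ((D*B)^(s-g) * (D*B)^g) := by
        rw [mr D B hD0.le hB0.le (s-g), mr D B hD0.le hB0.le g]
        have eD : D^(a+g-s) * D^(s-g) * D^g = D^(a+g) := by
          rw [← Real.rpow_add hD0, ← Real.rpow_add hD0]; congr 1; ring
        have eB : B^(s-g) * B^g = B^s := by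
          rw [← Real.rpow_add hB0]; congr 1; ring
        rw [← eD, ← eB]; ring
      rw [e1, e2]
      have h0 : P^(a+g-s) ≤ D^(a+g-s) := Real.rpow_le_rpow hP0.le hPD (by linarith)
      have h1 : (θ*P*b1)^(s-g) ≤ (D*B)^(s-g) := Real.rpow_le_rpow hX0 hA' (by linarith)
      have h2 : (θ*Q*b1)^g ≤ (D*B)^g := Real.rpow_le_rpow hY0 hBB' hg
      exact mul_le_mul h0 (mul_le_mul h1 h2 (by positivity) (by positivity))
        (by positivity) (by positivity)
    · have e1 : θ ^ s * P ^ a * Q ^ g * b1 ^ s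
          = Q^(a+g-s) * ((θ*P*b1)^a * (θ*Q*b1)^(s-a)) := by
        rw [mr (θ*P) b1 (by positivity) hb0.le a, mr θ P hθ0.le hP0.le a,
            mr (θ*Q) b1 (by positivity) hb0.le (s-a), mr θ Q hθ0.le hQ0.le (s-a)]
        have eθ : θ^a * θ^(s-a) = θ^s := by
          rw [← Real.rpow_add hθ0]; congr 1; ring
        have eb : b1^a * b1^(s-a) = b1^s := by
          rw [← Real.rpow_add hb0]; congr 1; ring
        have eQ : Q^(a+g-s) * Q^(s-a) = Q^g := by
          rw [← Real.rpow_add hQ0]; congr 1; ring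
        rw [← eθ, ← eb, ← eQ]; ring
      have e2 : D ^ (a+g) * B ^ s = D^(a+g-s) * ((D*B)^a * (D*B)^(s-a)) := by
        rw [mr D B hD0.le hB0.le a, mr D B hD0.le hB0.le (s-a)]
        have eD : D^(a+g-s) * D^a * D^(s-a) = D^(a+g) := by
          rw [← Real.rpow_add hD0, ← Real.rpow_add hD0]; congr 1; ring
        have eB : B^a * B^(s-a) = B^s := by
          rw [← Real.rpow_add hB0]; congr 1; ring
        rw [← eD, ← eB]; ring
      rw [e1, e2]
      have h0 : Q^(a+g-s) ≤ D^(a+g-s) := Real.rpow_le_rpow hQ0.le hQD (by linarith)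
      have h1 : (θ*P*b1)^a ≤ (D*B)^a := Real.rpow_le_rpow hX0 hA' ha
      have h2 : (θ*Q*b1)^(s-a) ≤ (D*B)^(s-a) := Real.rpow_le_rpow hY0 hBB' (by linarith)
      exact mul_le_mul h0 (mul_le_mul h1 h2 (by positivity) (by positivity))
        (by positivity) (by positivity)

lemma sid_main (w L0 L1 J0 J1 j2 P Q D B a g s : ℝ) (M : ℕ)
    (hw : 1 ≤ w) (hL1 : 1 ≤ L1) (hL01 : L1 ≤ L0)
    (hJ1 : 1 ≤ J1) (hJ01 : J1 ≤ J0) (hj2 : 1 ≤ j2)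
    (hP1 : 1 ≤ P) (hPL1 : P ≤ L1) (hPK1 : P ≤ max L1 (min w L0))
    (hQdef : Q = max j2 (min w J1)) (hj2D : j2 ≤ D)
    (hD1 : 1 ≤ D) (hDa : min L1 J0 ≤ D) (hDb : min L0 J1 ≤ D)
    (hB1 : L0 * L1 ≤ B) (hB2 : J0 * J1 ≤ B) (hB3 : L0 * J0 ≤ B)
    (ha : 0 ≤ a) (hg : 0 ≤ g) (has : a ≤ s) (hgs : g ≤ s) (hM : s ≤ (M:ℝ)) :
    (P / (P + (max w L0 - max L1 (min w L0)))) ^ M * P ^ a * Q ^ g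
      * (max w J0 * max J1 (min w J0)) ^ s ≤ D ^ (a + g) * B ^ s := by
  set K0 := max w L0 with hK0
  set K1 := max L1 (min w L0) with hK1
  set b1 := max w J0 * max J1 (min w J0) with hb1
  set θ := P / (P + (K0 - K1)) with hθ
  have h1L0 : (1:ℝ) ≤ L0 := le_trans hL1 hL01
  have h1J0 : (1:ℝ) ≤ J0 := le_trans hJ1 hJ01
  have hK01 : K1 ≤ K0 := by
    apply max_le
    · exact le_trans hL01 (le_max_right _ _)
    · exact le_trans (min_le_left _ _) (le_max_left _ _)
  have hPK0 : P ≤ K0 := le_trans hPK1 hK01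
  have hden : 0 < P + (K0 - K1) := by linarith
  have hθ0 : 0 < θ := div_pos (by linarith) hden
  have hθ1 : θ ≤ 1 := by
    rw [hθ, div_le_one hden]; linarith
  have hθK : θ * K0 ≤ K1 := by
    rw [hθ, div_mul_eq_mul_div, div_le_iff₀ hden]
    linarith [mul_nonneg (sub_nonneg.2 hPK1) (sub_nonneg.2 hK01), sq_nonneg (K1 - P)]
  have hb1' : b1 = J0 * max w J1 := by
    rcases le_total w J0 with h | h
    · rw [hb1, max_eq_right h, min_eq_left h, max_comm J1 w]
    · rw [hb1, max_eq_left h, min_eq_right h, max_eq_right hJ01,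
          max_eq_left (le_trans hJ01 h), mul_comm]
  have hwJ1 : 1 ≤ max w J1 := le_trans hw (le_max_left _ _)
  have hb1one : 1 ≤ b1 := by
    rw [hb1']
    calc (1:ℝ) = 1 * 1 := (one_mul 1).symm
      _ ≤ J0 * max w J1 := mul_le_mul h1J0 hwJ1 one_pos.le (by linarith)
  have hQ1 : 1 ≤ Q := by rw [hQdef]; exact le_trans hj2 (le_max_left _ _)
  have hone_L0L1 : (1:ℝ) ≤ L0 * L1 := by
    calc (1:ℝ) = 1 * 1 := (one_mul 1).symm
      _ ≤ L0 * L1 := mul_le_mul h1L0 hL1 one_pos.le (by linarith)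
  have hBone : (1:ℝ) ≤ B := le_trans hone_L0L1 hB1
  have hJ0D_of : D < P → J0 ≤ D := by
    intro hPD
    rcases le_total J0 L1 with h | h
    · rwa [min_eq_right h] at hDa
    · have : L1 ≤ D := by rwa [min_eq_left h] at hDa
      linarith
  -- claim (i): θ * b1 ≤ B
  have hclaim_i : θ * b1 ≤ B := by
    rcases le_or_gt w (max L0 J1) with hcase | hcase
    · have h2 : max w J1 ≤ max L0 J1 := max_le hcase (le_max_right _ _)
      have h3 : b1 ≤ J0 * max L0 J1 := by
        rw [hb1']; exact mul_le_mul_of_nonneg_left h2 (by linarith)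
      have h4 : J0 * max L0 J1 ≤ B := by
        rcases le_total L0 J1 with h | h
        · rw [max_eq_right h]; exact hB2
        · rw [max_eq_left h]; linarith [hB3]
      calc θ * b1 ≤ 1 * b1 := mul_le_mul_of_nonneg_right hθ1 (by linarith)
        _ = b1 := one_mul _
        _ ≤ J0 * max L0 J1 := h3
        _ ≤ B := h4
    · have hwL0 : L0 < w := lt_of_le_of_lt (le_max_left L0 J1) hcase
      have hwJ1' : J1 < w := lt_of_le_of_lt (le_max_right L0 J1) hcase
      have hK0w : K0 = w := max_eq_left hwL0.le
      have hK1L0 : K1 = L0 := by rw [hK1, min_eq_right hwL0.le, max_eq_right hL01]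
      have hb1w : b1 = J0 * w := by rw [hb1', max_eq_left hwJ1'.le]
      rw [hb1w]
      calc θ * (J0 * w) = (θ * K0) * J0 := by rw [hK0w]; ring
        _ ≤ K1 * J0 := mul_le_mul_of_nonneg_right hθK (by linarith)
        _ = L0 * J0 := by rw [hK1L0]
        _ ≤ B := hB3
  -- claim (A): θ * (P * b1) ≤ D * B
  have hclaim_A : θ * (P * b1) ≤ D * B := by
    rcases le_or_gt P D with hPD | hPD
    · calc θ * (P * b1) = P * (θ * b1) := by ring
        _ ≤ P * B := mul_le_mul_of_nonneg_left hclaim_i (by linarith)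
        _ ≤ D * B := mul_le_mul_of_nonneg_right hPD (by linarith)
    · have hJ0D : J0 ≤ D := hJ0D_of hPD
      have hJ1L1 : J1 ≤ L1 := by linarith
      have hkey : θ * (P * max w J1) ≤ B := by
        rcases le_or_gt w L0 with hwL | hwL
        · have h2 : max w J1 ≤ L0 := max_le hwL (by linarith)
          calc θ * (P * max w J1) ≤ 1 * (P * max w J1) :=
                mul_le_mul_of_nonneg_right hθ1 (mul_nonneg (by linarith) (by linarith))
            _ = P * max w J1 := one_mul _
            _ ≤ P * L0 := mul_le_mul_of_nonneg_left h2 (by linarith)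
            _ ≤ L1 * L0 := mul_le_mul_of_nonneg_right hPL1 (by linarith)
            _ = L0 * L1 := mul_comm _ _
            _ ≤ B := hB1
        · have hK0w : K0 = w := max_eq_left hwL.le
          have hK1L0 : K1 = L0 := by rw [hK1, min_eq_right hwL.le, max_eq_right hL01]
          have hmaxw : max w J1 = w := max_eq_left (by linarith)
          rw [hmaxw]
          calc θ * (P * w) = P * (θ * K0) := by rw [hK0w]; ring
            _ ≤ P * K1 := mul_le_mul_of_nonneg_left hθK (by linarith)
            _ = P * L0 := by rw [hK1L0]
            _ ≤ L1 * L0 := mul_le_mul_of_nonneg_right hPL1 (by linarith)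
            _ = L0 * L1 := mul_comm _ _
            _ ≤ B := hB1
      calc θ * (P * b1) = J0 * (θ * (P * max w J1)) := by rw [hb1']; ring
        _ ≤ J0 * B := mul_le_mul_of_nonneg_left hkey (by linarith)
        _ ≤ D * B := mul_le_mul_of_nonneg_right hJ0D (by linarith)
  -- claim (B): θ * (Q * b1) ≤ D * B
  have hclaim_B : θ * (Q * b1) ≤ D * B := by
    rcases le_or_gt Q D with hQD | hQD
    · calc θ * (Q * b1) = Q * (θ * b1) := by ring
        _ ≤ Q * B := mul_le_mul_of_nonneg_left hclaim_i (by linarith)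
        _ ≤ D * B := mul_le_mul_of_nonneg_right hQD (by linarith)
    · have hQmin : Q = min w J1 := by
        rcases max_cases j2 (min w J1) with ⟨h1, h2⟩ | ⟨h1, h2⟩
        · exfalso; rw [hQdef, h1] at hQD; linarith
        · rw [hQdef, h1]
      have hQJ1 : Q ≤ J1 := by rw [hQmin]; exact min_le_right _ _
      have hL0D : L0 ≤ D := by
        rcases le_total L0 J1 with h | h
        · rwa [min_eq_left h] at hDb
        · exfalso
          have : J1 ≤ D := by rwa [min_eq_right h] at hDb
          linarith
      have hQw : Q ≤ w := by rw [hQmin]; exact min_le_left _ _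
      have hwL0 : L0 ≤ w := by linarith
      have hK0w : K0 = w := max_eq_left hwL0
      have hK1L0 : K1 = L0 := by rw [hK1, min_eq_right hwL0, max_eq_right hL01]
      have hQmax : Q * max w J1 = w * J1 := by rw [hQmin]; exact min_mul_max w J1
      have hθw : θ * w ≤ L0 := by
        calc θ * w = θ * K0 := by rw [hK0w]
          _ ≤ K1 := hθK
          _ = L0 := hK1L0
      calc θ * (Q * b1) = (Q * max w J1) * (θ * J0) := by rw [hb1']; ring
        _ = (w * J1) * (θ * J0) := by rw [hQmax]
        _ = (θ * w) * (J0 * J1) := by ring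
        _ ≤ L0 * (J0 * J1) := mul_le_mul_of_nonneg_right hθw (mul_nonneg (by linarith) (by linarith))
        _ ≤ D * B := mul_le_mul hL0D hB2 (mul_nonneg (by linarith) (by linarith)) (by linarith)
  -- claim (D)
  have hPQ : P ≤ D ∨ Q ≤ D := by
    rcases le_or_gt P D with h | h
    · exact Or.inl h
    · right
      have hJ0D : J0 ≤ D := hJ0D_of h
      rw [hQdef]
      exact max_le hj2D (le_trans (min_le_right _ _) (by linarith))
  have hfinal := sid_combine θ P Q b1 D B a g s hθ0 hθ1 hP1 hQ1 hb1one hD1 hBone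
      hclaim_i hclaim_A hclaim_B hPQ ha hg has hgs
  have hM' : θ ^ M ≤ θ ^ s := by
    rw [← Real.rpow_natCast θ M]
    exact Real.rpow_le_rpow_of_exponent_ge hθ0 hθ1 hM
  have step : θ ^ M * P ^ a * Q ^ g * b1 ^ s ≤ θ ^ s * P ^ a * Q ^ g * b1 ^ s := by
    have h1 : (0:ℝ) ≤ P ^ a := Real.rpow_nonneg (by linarith) a
    have h2 : (0:ℝ) ≤ Q ^ g := Real.rpow_nonneg (by linarith) g
    have h3 : (0:ℝ) ≤ b1 ^ s := Real.rpow_nonneg (by linarith) s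
    exact mul_le_mul_of_nonneg_right
      (mul_le_mul_of_nonneg_right (mul_le_mul_of_nonneg_right hM' h1) h2) h3
  exact le_trans step hfinal

end SiduleAux

/-- **Pointwise estimate (siduele) from the proof of Lemma 4.2.**
For `γ, ν ≥ 0`, `m, n ≥ 2` and `s ≥ max(γ, ν+4)` there exist an integer `M ≥ 0` and `C > 0`
such that uniformly in `k ∈ 𝒵`, `ℓ ∈ 𝒵^m`, `𝐣 ∈ 𝒵^n`:
`[μ(k,ℓ)/(μ(k,ℓ)+S(k,ℓ))]^M μ(k,ℓ)^{ν+4} μ(k,𝐣)^γ β(k,𝐣)^s ≤ C μ(ℓ,𝐣)^{γ+ν+4} β(ℓ,𝐣)^s`. -/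
theorem siduele (d m n : ℕ) (hd : 1 ≤ d) (hm : 2 ≤ m) (hn : 2 ≤ n)
    (γ ν s : ℝ) (hγ : 0 ≤ γ) (hν : 0 ≤ ν) (hs : max γ (ν + 4) ≤ s) :
    ∃ M : ℕ, ∃ C > (0 : ℝ), ∀ (k : Idx d) (L : Fin m → Idx d) (J : Fin n → Idx d),
      (mu (Fin.cons k L) / (mu (Fin.cons k L) + S (Fin.cons k L))) ^ M
          * mu (Fin.cons k L) ^ (ν + 4) * mu (Fin.cons k J) ^ γ * beta (Fin.cons k J) ^ s
        ≤ C * mu (Fin.append L J) ^ (γ + ν + 4) * beta (Fin.append L J) ^ s := by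

  have hs_a : ν + 4 ≤ s := le_trans (le_max_right _ _) hs
  have hs_g : γ ≤ s := le_trans (le_max_left _ _) hs
  refine ⟨⌈s⌉₊, 1, one_pos, ?_⟩
  intro k L J
  rw [one_mul]
  obtain ⟨hc0, hc1, hc2⟩ := sid_tt_cons hm k L
  obtain ⟨hd0, hd1, hd2⟩ := sid_tt_cons hn k J
  have hmuL : mu (Fin.cons k L) = tt 2 (Fin.cons k L) := rfl
  have hmuJ : mu (Fin.cons k J) = tt 2 (Fin.cons k J) := rfl
  have hmuA : mu (Fin.append L J) = tt 2 (Fin.append L J) := rfl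
  have hbetaJ : beta (Fin.cons k J) = tt 0 (Fin.cons k J) * tt 1 (Fin.cons k J) := rfl
  have hbetaA : beta (Fin.append L J) = tt 0 (Fin.append L J) * tt 1 (Fin.append L J) := rfl
  have hlen : (sw (Fin.cons k L)).length = m + 1 := sid_sw_length _
  have hS : S (Fin.cons k L) = tt 0 (Fin.cons k L) - tt 1 (Fin.cons k L) := by
    have e0 : (sw (Fin.cons k L)).getD 0 0 = (sw (Fin.cons k L)).getD 0 1 := by
      rw [List.getD_eq_getElem _ _ (show 0 < (sw (Fin.cons k L)).length by omega),
          List.getD_eq_getElem _ _ (show 0 < (sw (Fin.cons k L)).length by omega)]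
    have e1 : (sw (Fin.cons k L)).getD 1 0 = (sw (Fin.cons k L)).getD 1 1 := by
      rw [List.getD_eq_getElem _ _ (show 1 < (sw (Fin.cons k L)).length by omega),
          List.getD_eq_getElem _ _ (show 1 < (sw (Fin.cons k L)).length by omega)]
    rw [Paper.S, e0, e1]; rfl
  have hPL1 : tt 2 (Fin.cons k L) ≤ tt 1 L := by
    rw [hc2]; exact max_le (sid_tt_anti (by omega) L) (min_le_right _ _)
  have hPK1 : tt 2 (Fin.cons k L) ≤ max (tt 1 L) (min (wt k) (tt 0 L)) := by
    rw [← hc1]; exact sid_tt_anti (by omega) (Fin.cons k L)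
  have hj2D : tt 2 J ≤ tt 2 (Fin.append L J) := by
    rcases Nat.lt_or_ge 2 n with h | h
    · exact sid_tt_append_right L J h
    · have hJlen : (sw J).length = n := sid_sw_length J
      have e : tt 2 J = 1 := List.getD_eq_default _ _ (by omega)
      rw [e]; exact sid_one_le_tt 2 _
  have hDa : min (tt 1 L) (tt 0 J) ≤ tt 2 (Fin.append L J) := by
    have h := sid_tt_append_mix L J (show 1 < m by omega) (show 0 < n by omega)
      (min_le_left (tt 1 L) (tt 0 J)) (min_le_right _ _)
    simpa using h
  have hDb : min (tt 0 L) (tt 1 J) ≤ tt 2 (Fin.append L J) := by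
    have h := sid_tt_append_mix L J (show 0 < m by omega) (show 1 < n by omega)
      (min_le_left (tt 0 L) (tt 1 J)) (min_le_right _ _)
    simpa using h
  have hB1' : tt 0 L * tt 1 L ≤ tt 0 (Fin.append L J) * tt 1 (Fin.append L J) :=
    mul_le_mul (sid_tt_append_left L J (by omega)) (sid_tt_append_left L J (by omega))
      (by linarith [sid_one_le_tt 1 L]) (by linarith [sid_one_le_tt 0 (Fin.append L J)])
  have hB2' : tt 0 J * tt 1 J ≤ tt 0 (Fin.append L J) * tt 1 (Fin.append L J) :=
    mul_le_mul (sid_tt_append_right L J (by omega)) (sid_tt_append_right L J (by omega))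
      (by linarith [sid_one_le_tt 1 J]) (by linarith [sid_one_le_tt 0 (Fin.append L J)])
  have hB3' : tt 0 L * tt 0 J ≤ tt 0 (Fin.append L J) * tt 1 (Fin.append L J) := by
    have h5 : min (tt 0 L) (tt 0 J) ≤ tt 1 (Fin.append L J) := by
      have h := sid_tt_append_mix L J (show 0 < m by omega) (show 0 < n by omega)
        (min_le_left (tt 0 L) (tt 0 J)) (min_le_right _ _)
      simpa using h
    rcases le_total (tt 0 L) (tt 0 J) with h | h
    · rw [min_eq_left h] at h5
      calc tt 0 L * tt 0 J = tt 0 J * tt 0 L := mul_comm _ _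
        _ ≤ tt 0 (Fin.append L J) * tt 1 (Fin.append L J) :=
            mul_le_mul (sid_tt_append_right L J (by omega)) h5
              (by linarith [sid_one_le_tt 0 L]) (by linarith [sid_one_le_tt 0 (Fin.append L J)])
    · rw [min_eq_right h] at h5
      exact mul_le_mul (sid_tt_append_left L J (by omega)) h5
        (by linarith [sid_one_le_tt 0 J]) (by linarith [sid_one_le_tt 0 (Fin.append L J)])
  have hexp : γ + ν + 4 = (ν + 4) + γ := by ring
  rw [hS, hmuL, hmuJ, hmuA, hbetaJ, hbetaA, hexp, hc0, hc1, hd0, hd1]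
  exact sid_main (wt k) (tt 0 L) (tt 1 L) (tt 0 J) (tt 1 J) (tt 2 J)
    (tt 2 (Fin.cons k L)) (tt 2 (Fin.cons k J)) (tt 2 (Fin.append L J))
    (tt 0 (Fin.append L J) * tt 1 (Fin.append L J)) (ν + 4) γ s ⌈s⌉₊
    (sid_one_le_wt k) (sid_one_le_tt 1 L) (sid_tt_anti (by omega) L)
    (sid_one_le_tt 1 J) (sid_tt_anti (by omega) J) (sid_one_le_tt 2 J)
    (sid_one_le_tt 2 (Fin.cons k L)) hPL1 hPK1 hd2 hj2D
    (sid_one_le_tt 2 (Fin.append L J)) hDa hDb hB1' hB2' hB3'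
    (by linarith) hγ hs_a hs_g (Nat.le_ceil s)
end
end

section
/- Combinatorial inequality from the proof of Lemma 4.2: for every k ∈ 𝒵, every ℓ ∈ 𝒵^m and every 𝐣 ∈ 𝒵^n (m, n ≥ 1), one has (1 + S(k,ℓ)) · (1 + S(k,𝐣)) ≥ 1 + S(ℓ,𝐣), where (k,ℓ) and (k,𝐣) denote the tuples obtained by appending k to ℓ and to 𝐣 respectively, and (ℓ,𝐣) the concatenation of ℓ and 𝐣. -/
open scoped BigOperators

noncomputable section

namespace Paper

attribute [local instance] Classical.propDecidable

variable {d : ℕ}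

end Paper

open Paper

section AuxSort
attribute [local instance] Classical.propDecidable

local notation "srt" => List.insertionSort ((· ≥ ·) : ℝ → ℝ → Prop)
local notation "oins" => List.orderedInsert ((· ≥ ·) : ℝ → ℝ → Prop)

lemma aux_getD_nonneg (l : List ℝ) (h : ∀ x ∈ l, 0 ≤ x) (i : ℕ) : 0 ≤ l.getD i 0 := by
  rcases lt_or_ge i l.length with hi | hi
  · rw [List.getD_eq_getElem _ _ hi]; exact h _ (List.getElem_mem _)
  · rw [List.getD_eq_default _ _ hi]

lemma aux_getD1_le_getD0 (l : List ℝ) (hs : l.Pairwise (· ≥ ·)) (h : ∀ x ∈ l, 0 ≤ x) :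
    l.getD 1 0 ≤ l.getD 0 0 := by
  match l with
  | [] => simp
  | [a] => simpa using h a (by simp)
  | a :: b :: t =>
    have := List.rel_of_pairwise_cons hs (a' := b) (by simp)
    simpa using this

lemma aux_g0_oins (a : ℝ) (l : List ℝ) (ha : 0 ≤ a) (hs : l.Pairwise (· ≥ ·)) :
    (oins a l).getD 0 0 = max a (l.getD 0 0) := by
  match l with
  | [] => simp [List.orderedInsert, max_eq_left ha]
  | b :: t =>
    by_cases hab : a ≥ b
    · simp [List.orderedInsert, hab, max_eq_left hab]
    · push_neg at hab
      simp [List.orderedInsert, not_le.2 hab, max_eq_right hab.le]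

lemma aux_g1_oins (a : ℝ) (l : List ℝ) (ha : 0 ≤ a) (hs : l.Pairwise (· ≥ ·))
    (hnn : ∀ x ∈ l, 0 ≤ x) :
    (oins a l).getD 1 0 = min (max a (l.getD 1 0)) (l.getD 0 0) := by
  match l with
  | [] => simp [List.orderedInsert, max_eq_left ha, min_eq_right ha]
  | b :: t =>
    by_cases hab : a ≥ b
    · have h1 : b ≤ max a (t.getD 0 0) := le_trans hab (le_max_left _ _)
      simp [List.orderedInsert, hab, min_eq_right h1]
    · push_neg at hab
      have hb : 0 ≤ b := hnn b (by simp)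
      have htb : t.getD 0 0 ≤ b := by
        match t with
        | [] => simpa using hb
        | c :: t' => simpa using List.rel_of_pairwise_cons hs (a' := c) (by simp)
      have hst : t.Pairwise (· ≥ ·) := hs.tail
      have : (oins a t).getD 0 0 = max a (t.getD 0 0) := aux_g0_oins a t ha hst
      simp only [List.orderedInsert, ge_iff_le, not_le.2 hab, if_false]
      simp only [List.getD_cons_succ, List.getD_cons_zero, this]
      rw [min_eq_left (max_le hab.le htb)]

set_option maxHeartbeats 2000000 in
lemma aux_maxmin_id (a p q s r : ℝ) (ha : 0 ≤ a) (hp : 0 ≤ p) (hq : 0 ≤ q)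
    (hs : 0 ≤ s) (hr : 0 ≤ r) (hsp : s ≤ p) (hrq : r ≤ q) :
    min (max a (max (min p q) (max s r))) (max p q)
      = max (min (max a p) q) (max (min (max a s) p) r) := by
  simp only [max_def, min_def]
  split_ifs <;> linarith

set_option maxHeartbeats 2000000 in
lemma aux_sum_ineq (a p q s r : ℝ) (ha : 0 ≤ a) (hp : 0 ≤ p) (hq : 0 ≤ q)
    (hs : 0 ≤ s) (hr : 0 ≤ r) (hsp : s ≤ p) (hrq : r ≤ q) :
    max p q - max (min p q) (max s r)
      ≤ (max a p - min (max a s) p) + (max a q - min (max a r) q) := by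
  simp only [max_def, min_def]
  split_ifs <;> linarith

lemma aux_mem_srt_nonneg (l : List ℝ) (h : ∀ x ∈ l, 0 ≤ x) : ∀ x ∈ srt l, 0 ≤ x := by
  intro x hx; exact h x (by simpa using hx)

lemma aux_srt_sorted (l : List ℝ) : (srt l).Pairwise (· ≥ ·) :=
  List.pairwise_insertionSort _ l

lemma aux_append (l₁ l₂ : List ℝ) (h1 : ∀ x ∈ l₁, 0 ≤ x) (h2 : ∀ x ∈ l₂, 0 ≤ x) :
    (srt (l₁ ++ l₂)).getD 0 0 = max ((srt l₁).getD 0 0) ((srt l₂).getD 0 0) ∧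
    (srt (l₁ ++ l₂)).getD 1 0
      = max (min ((srt l₁).getD 0 0) ((srt l₂).getD 0 0))
          (max ((srt l₁).getD 1 0) ((srt l₂).getD 1 0)) := by
  induction l₁ with
  | nil =>
    have h0 : 0 ≤ (srt l₂).getD 0 0 :=
      aux_getD_nonneg _ (aux_mem_srt_nonneg _ h2) 0
    have h1' : 0 ≤ (srt l₂).getD 1 0 :=
      aux_getD_nonneg _ (aux_mem_srt_nonneg _ h2) 1
    constructor
    · exact (max_eq_right h0).symm
    · show (srt l₂).getD 1 0
        = max (min 0 ((srt l₂).getD 0 0)) (max 0 ((srt l₂).getD 1 0))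
      rw [min_eq_left h0, max_eq_right h1', max_eq_right h1']
  | cons a t ih =>
    have ha : 0 ≤ a := h1 a (by simp)
    have ht : ∀ x ∈ t, 0 ≤ x := fun x hx => h1 x (by simp [hx])
    obtain ⟨ih0, ih1⟩ := ih ht
    have htl2 : ∀ x ∈ t ++ l₂, 0 ≤ x := by
      intro x hx; rcases List.mem_append.1 hx with h | h
      exacts [ht x h, h2 x h]
    have hsrt : (srt (t ++ l₂)).Pairwise (· ≥ ·) := aux_srt_sorted _
    have hsrtnn := aux_mem_srt_nonneg _ htl2
    have e : srt ((a :: t) ++ l₂) = oins a (srt (t ++ l₂)) := rfl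
    have et : srt (a :: t) = oins a (srt t) := rfl
    set p := (srt t).getD 0 0 with hp
    set s := (srt t).getD 1 0 with hs
    set q := (srt l₂).getD 0 0 with hq
    set r := (srt l₂).getD 1 0 with hr
    have hp0 : 0 ≤ p := aux_getD_nonneg _ (aux_mem_srt_nonneg _ ht) 0
    have hs0 : 0 ≤ s := aux_getD_nonneg _ (aux_mem_srt_nonneg _ ht) 1
    have hq0 : 0 ≤ q := aux_getD_nonneg _ (aux_mem_srt_nonneg _ h2) 0
    have hr0 : 0 ≤ r := aux_getD_nonneg _ (aux_mem_srt_nonneg _ h2) 1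
    have hsp : s ≤ p := aux_getD1_le_getD0 _ (aux_srt_sorted t) (aux_mem_srt_nonneg _ ht)
    have hrq : r ≤ q := aux_getD1_le_getD0 _ (aux_srt_sorted l₂) (aux_mem_srt_nonneg _ h2)
    constructor
    · rw [e, aux_g0_oins a _ ha hsrt, ih0, et, aux_g0_oins a _ ha (aux_srt_sorted t)]
      rw [max_assoc]
    · rw [e, aux_g1_oins a _ ha hsrt hsrtnn, ih0, ih1, et,
        aux_g0_oins a _ ha (aux_srt_sorted t),
        aux_g1_oins a _ ha (aux_srt_sorted t) (aux_mem_srt_nonneg _ ht)]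
      exact aux_maxmin_id a p q s r ha hp0 hq0 hs0 hr0 hsp hrq

open Paper in
lemma aux_wt_nonneg {d : ℕ} : ∀ (x : ℝ), (∀ K : ℕ, ∀ F : Fin K → Idx d,
    x ∈ List.ofFn (fun i => wt (F i)) → 0 ≤ x) := by
  intro x K F hx
  obtain ⟨i, rfl⟩ := List.mem_ofFn.1 hx
  exact le_trans zero_le_one (le_max_left 1 _)

open Paper in
lemma aux_sw_ofFn {d K : ℕ} (F : Fin K → Idx d) :
    sw F = srt (List.ofFn fun i => wt (F i)) := rfl

open Paper in
lemma aux_sw_nonneg {d K : ℕ} (F : Fin K → Idx d) : ∀ x ∈ sw F, 0 ≤ x := by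
  rw [aux_sw_ofFn]
  exact aux_mem_srt_nonneg _ (fun x hx => aux_wt_nonneg x K F hx)

open Paper in
lemma aux_sw_sorted {d K : ℕ} (F : Fin K → Idx d) : (sw F).Pairwise (· ≥ ·) := by
  rw [aux_sw_ofFn]; exact aux_srt_sorted _

open Paper in
lemma aux_S_nonneg {d K : ℕ} (F : Fin K → Idx d) : 0 ≤ S F :=
  sub_nonneg.2 (aux_getD1_le_getD0 _ (aux_sw_sorted F) (aux_sw_nonneg F))

open Paper in
lemma aux_sw_cons {d K : ℕ} (k : Idx d) (F : Fin K → Idx d) :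
    sw (Fin.cons k F) = oins (wt k) (sw F) := by
  rw [aux_sw_ofFn, aux_sw_ofFn, List.ofFn_succ]
  simp only [Fin.cons_zero, Fin.cons_succ]
  rw [List.insertionSort]
  rfl

open Paper in
lemma aux_sw_append {d K M : ℕ} (F : Fin K → Idx d) (G : Fin M → Idx d) :
    sw (Fin.append F G)
      = srt ((List.ofFn fun i => wt (F i)) ++ (List.ofFn fun i => wt (G i))) := by
  rw [aux_sw_ofFn]
  congr 1
  rw [show (List.ofFn fun i => wt (Fin.append F G i))
      = (List.ofFn (Fin.append F G)).map wt by rw [List.map_ofFn]; rfl,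
    List.ofFn_fin_append, List.map_append, List.map_ofFn, List.map_ofFn]
  rfl

end AuxSort

/-- **Combinatorial inequality from the proof of Lemma 4.2:**
`(1 + S(k,ℓ)) (1 + S(k,𝐣)) ≥ 1 + S(ℓ,𝐣)`. -/
theorem S_combinatorial (d m n : ℕ) (hd : 1 ≤ d) (hm : 1 ≤ m) (hn : 1 ≤ n)
    (k : Idx d) (L : Fin m → Idx d) (J : Fin n → Idx d) :
    1 + S (Fin.append L J) ≤ (1 + S (Fin.cons k L)) * (1 + S (Fin.cons k J)) := by
  classical
  set a := wt k with hak
  set p := (sw L).getD 0 0 with hp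
  set s := (sw L).getD 1 0 with hs
  set q := (sw J).getD 0 0 with hq
  set r := (sw J).getD 1 0 with hr
  have ha : (0:ℝ) ≤ a := le_trans zero_le_one (le_max_left 1 _)
  have hp0 : 0 ≤ p := aux_getD_nonneg _ (aux_sw_nonneg L) 0
  have hs0 : 0 ≤ s := aux_getD_nonneg _ (aux_sw_nonneg L) 1
  have hq0 : 0 ≤ q := aux_getD_nonneg _ (aux_sw_nonneg J) 0
  have hr0 : 0 ≤ r := aux_getD_nonneg _ (aux_sw_nonneg J) 1
  have hsp : s ≤ p := aux_getD1_le_getD0 _ (aux_sw_sorted L) (aux_sw_nonneg L)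
  have hrq : r ≤ q := aux_getD1_le_getD0 _ (aux_sw_sorted J) (aux_sw_nonneg J)
  have hSKL : S (Fin.cons k L) = max a p - min (max a s) p := by
    unfold S
    rw [aux_sw_cons, aux_g0_oins a _ ha (aux_sw_sorted L),
      aux_g1_oins a _ ha (aux_sw_sorted L) (aux_sw_nonneg L)]
  have hSKJ : S (Fin.cons k J) = max a q - min (max a r) q := by
    unfold S
    rw [aux_sw_cons, aux_g0_oins a _ ha (aux_sw_sorted J),
      aux_g1_oins a _ ha (aux_sw_sorted J) (aux_sw_nonneg J)]
  have hSLJ : S (Fin.append L J) = max p q - max (min p q) (max s r) := by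
    unfold S
    rw [aux_sw_append]
    obtain ⟨e0, e1⟩ := aux_append (List.ofFn fun i => wt (L i))
      (List.ofFn fun i => wt (J i)) (fun x hx => aux_wt_nonneg x m L hx)
      (fun x hx => aux_wt_nonneg x n J hx)
    rw [e0, e1]
    rfl
  have key : S (Fin.append L J) ≤ S (Fin.cons k L) + S (Fin.cons k J) := by
    rw [hSKL, hSKJ, hSLJ]
    exact aux_sum_ineq a p q s r ha hp0 hq0 hs0 hr0 hsp hrq
  have h1 := aux_S_nonneg (Fin.cons k L)
  have h2 := aux_S_nonneg (Fin.cons k J)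
  nlinarith [mul_nonneg h1 h2]
end
end
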